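/- arXiv:1106.5191 — 2 statements merged into one kernel-verified Lean document; each statement's English description precedes it below -/
import Mathlib

section
/- (Discrete uniform Gronwall lemma.) Let Δt > 0 and let (fₙ), (gₙ), (yₙ) be sequences of nonnegative real numbers satisfying (yₙ₊₁ − yₙ)/Δt ≤ fₙ yₙ + gₙ for all n ≥ 0. Suppose there exist an integer n₀ ≥ 0, a real r > 0, and nonnegative constants a₀, a₁, a₂ such that, setting N = ⌊r/Δt⌋, for every integer k₀ ≥ n₀ one has Δt · Σ_{n=k₀}^{k₀+N} fₙ ≤ a₀, Δt · Σ_{n=k₀}^{k₀+N} gₙ ≤ a₁, and Δt · Σ_{n=k₀}^{k₀+N} yₙ ≤ a₂. Then yₙ ≤ (a₁ + a₂/r) · exp(a₀) for all n ≥ n₀ + N. -/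
/-!
Rewriting the recurrence as `yₙ₊₁ ≤ (1 + Δt fₙ) yₙ + Δt gₙ`, the discrete Grönwall inequality
bounds `yₙ` by `(yₘ + Δt ∑ gⱼ) · exp (Δt ∑ fⱼ)` for any `m ≤ n`, sums over `[m, n)`. Taking the
window `[n - N, n]`, whose `N + 1` points span a time `Δt (N + 1) > r`, the bound on `Δt ∑ yⱼ`
forces some `yₘ ≤ a₂ / r` with `m` in the window; the window bounds on `f` and `g` then finish.
-/

open Finset

lemma lt_mul_natFloor_div_add_one {r Δt : ℝ} (hΔt : 0 < Δt) : r < Δt * (⌊r / Δt⌋₊ + 1) := by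
  rw [mul_comm, ← div_lt_iff₀ hΔt]
  exact Nat.lt_floor_add_one _

lemma exists_le_div_of_mul_sum_le {ι : Type*} {s : Finset ι} (hs : s.Nonempty) {y : ι → ℝ}
    (hy : ∀ i ∈ s, 0 ≤ y i) {Δt r a : ℝ} (hΔt : 0 ≤ Δt) (hr : 0 < r) (hcard : r ≤ Δt * #s)
    (hsum : Δt * ∑ i ∈ s, y i ≤ a) : ∃ i ∈ s, y i ≤ a / r := by
  obtain ⟨i, hi, hmin⟩ := s.exists_min_image y hs
  refine ⟨i, hi, (le_div_iff₀' hr).2 ?_⟩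
  have hcard_le : #s * y i ≤ ∑ j ∈ s, y j := by
    simpa using s.card_nsmul_le_sum y (y i) hmin
  calc r * y i ≤ Δt * #s * y i := by gcongr; exact hy i hi
    _ = Δt * (#s * y i) := mul_assoc _ _ _
    _ ≤ Δt * ∑ j ∈ s, y j := by gcongr
    _ ≤ a := hsum

lemma sum_Ico_le_sum_Icc {h : ℕ → ℝ} (hh : ∀ j, 0 ≤ h j) {k l m n : ℕ} (hkm : k ≤ m)
    (hnl : n ≤ l + 1) : ∑ j ∈ Ico m n, h j ≤ ∑ j ∈ Icc k l, h j := by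
  refine sum_le_sum_of_subset_of_nonneg (fun j hj ↦ ?_) (fun j _ _ ↦ hh j)
  simp only [mem_Icc, mem_Ico] at hj ⊢
  omega

theorem discrete_uniform_gronwall_general (Δt : ℝ) (hΔt : 0 < Δt) (f g y : ℕ → ℝ)
    (hf : ∀ n, 0 ≤ f n) (hg : ∀ n, 0 ≤ g n) (hy : ∀ n, 0 ≤ y n)
    (hrec : ∀ n : ℕ, (y (n + 1) - y n) / Δt ≤ f n * y n + g n)
    (n₀ : ℕ) (r : ℝ) (hr : 0 < r) (a₀ a₁ a₂ : ℝ)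
    (hsumf : ∀ k₀ : ℕ, n₀ ≤ k₀ →
      Δt * ∑ n ∈ Finset.Icc k₀ (k₀ + ⌊r / Δt⌋₊), f n ≤ a₀)
    (hsumg : ∀ k₀ : ℕ, n₀ ≤ k₀ →
      Δt * ∑ n ∈ Finset.Icc k₀ (k₀ + ⌊r / Δt⌋₊), g n ≤ a₁)
    (hsumy : ∀ k₀ : ℕ, n₀ ≤ k₀ →
      Δt * ∑ n ∈ Finset.Icc k₀ (k₀ + ⌊r / Δt⌋₊), y n ≤ a₂) :
    ∀ n : ℕ, n₀ + ⌊r / Δt⌋₊ ≤ n → y n ≤ (a₁ + a₂ / r) * Real.exp a₀ := by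
  set N := ⌊r / Δt⌋₊
  intro n hn
  obtain ⟨k, hk, rfl⟩ : ∃ k, n₀ ≤ k ∧ n = k + N := ⟨n - N, by omega, by omega⟩
  have hstep (j : ℕ) : y (j + 1) ≤ (1 + Δt * f j) * y j + Δt * g j := by
    have := (div_le_iff₀ hΔt).1 (hrec j)
    linarith
  have hspan : r ≤ Δt * #(Icc k (k + N)) := by
    rw [Nat.card_Icc, show k + N + 1 - k = N + 1 by omega, Nat.cast_add_one]
    exact (lt_mul_natFloor_div_add_one hΔt).le
  obtain ⟨m, hm, hym⟩ := exists_le_div_of_mul_sum_le (nonempty_Icc.2 (by omega))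
    (fun i _ ↦ hy i) hΔt.le hr hspan (hsumy k hk)
  have hwindow (h : ℕ → ℝ) (hh : ∀ j, 0 ≤ h j) :
      ∑ j ∈ Ico m (k + N), Δt * h j ≤ Δt * ∑ j ∈ Icc k (k + N), h j := by
    rw [← mul_sum]
    exact mul_le_mul_of_nonneg_left (sum_Ico_le_sum_Icc hh (mem_Icc.1 hm).1 (Nat.le_succ _)) hΔt.le
  have hg_sum := (hwindow g hg).trans (hsumg k hk)
  have hf_sum := (hwindow f hf).trans (hsumf k hk)
  have hg_sum_nonneg : 0 ≤ ∑ j ∈ Ico m (k + N), Δt * g j :=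
    sum_nonneg fun j _ ↦ mul_nonneg hΔt.le (hg j)
  calc y (k + N)
      ≤ (y m + ∑ j ∈ Ico m (k + N), Δt * g j) * Real.exp (∑ j ∈ Ico m (k + N), Δt * f j) :=
        discrete_gronwall (hy m) (fun j _ ↦ hstep j) (fun j _ ↦ mul_nonneg hΔt.le (hf j))
          (fun j _ ↦ mul_nonneg hΔt.le (hg j)) (mem_Icc.1 hm).2
    _ ≤ (a₂ / r + a₁) * Real.exp a₀ := by
        gcongr
        exact add_nonneg ((hy m).trans hym) (hg_sum_nonneg.trans hg_sum)
    _ = (a₁ + a₂ / r) * Real.exp a₀ := by ring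

/-- Discrete uniform Gronwall lemma (Lemma 3 of the paper, after Shen). -/
theorem discrete_uniform_gronwall (Δt : ℝ) (hΔt : 0 < Δt) (f g y : ℕ → ℝ)
    (hf : ∀ n, 0 ≤ f n) (hg : ∀ n, 0 ≤ g n) (hy : ∀ n, 0 ≤ y n)
    (hrec : ∀ n : ℕ, (y (n + 1) - y n) / Δt ≤ f n * y n + g n)
    (n₀ : ℕ) (r : ℝ) (hr : 0 < r) (a₀ a₁ a₂ : ℝ)
    (ha₀ : 0 ≤ a₀) (ha₁ : 0 ≤ a₁) (ha₂ : 0 ≤ a₂)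
    (hsumf : ∀ k₀ : ℕ, n₀ ≤ k₀ →
      Δt * ∑ n ∈ Finset.Icc k₀ (k₀ + ⌊r / Δt⌋₊), f n ≤ a₀)
    (hsumg : ∀ k₀ : ℕ, n₀ ≤ k₀ →
      Δt * ∑ n ∈ Finset.Icc k₀ (k₀ + ⌊r / Δt⌋₊), g n ≤ a₁)
    (hsumy : ∀ k₀ : ℕ, n₀ ≤ k₀ →
      Δt * ∑ n ∈ Finset.Icc k₀ (k₀ + ⌊r / Δt⌋₊), y n ≤ a₂) :
    ∀ n : ℕ, n₀ + ⌊r / Δt⌋₊ ≤ n → y n ≤ (a₁ + a₂ / r) * Real.exp a₀ :=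
  discrete_uniform_gronwall_general Δt hΔt f g y hf hg hy hrec n₀ r hr a₀ a₁ a₂ hsumf hsumg hsumy
end

section
/- Let (H, d) be a complete metric space and let S : H → H be continuous. Assume: (i) there exists a nonempty bounded set B ⊆ H such that for every θ⁰ ∈ H there is n₀ ∈ ℕ with Sⁿθ⁰ ∈ B for all n ≥ n₀; (ii) for every bounded set C ⊆ H there exists n₁ ∈ ℕ such that the union ⋃_{n ≥ n₁} Sⁿ(C) has compact closure in H. Then the set A = ⋂_{n ≥ 0} closure(⋃_{k ≥ n} S^k(B)) is nonempty and compact, S(A) = A, and for every θ⁰ ∈ H the distance from Sⁿθ⁰ to A tends to 0 as n → ∞. -/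
/-!
The attractor is the ω-limit set `ω(B)`. From `n₁` on, the closed tails
`closure (⋃ k ≥ n, Sᵏ '' B)` are nested, nonempty and compact, so their intersection is nonempty
and compact. `S` maps each compact tail onto the next one, and a continuous map commutes with
nested intersections of compact sets, so `S '' ω(B) = ω(B)`. Finally an orbit eventually enters
`B`: its own ω-limit set lies in `ω(B)` and it eventually stays in a compact tail, so it is
eventually inside every open neighbourhood of `ω(B)`.
-/

open Filter Set Topology Metric omegaLimit

theorem image2_Ici_eq_iUnion {α β : Type*} (ϕ : ℕ → α → β) (s : Set α) (n : ℕ) :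
    image2 ϕ (Ici n) s = ⋃ k ≥ n, ϕ k '' s := by
  simp only [← iUnion_image_left, mem_Ici, ge_iff_le]

theorem antitone_iUnion_ge {α : Type*} (t : ℕ → Set α) : Antitone fun n => ⋃ k ≥ n, t k :=
  fun _ _ hmn => biUnion_subset_biUnion_left fun _ hk => le_trans hmn hk

theorem Antitone.image_iInter_of_isCompact {X Y : Type*} [TopologicalSpace X]
    [TopologicalSpace Y] [T1Space Y] {K : ℕ → Set X} (hK : Antitone K) (hK₀ : IsCompact (K 0))
    (hKc : ∀ n, IsClosed (K n)) {f : X → Y} (hf : Continuous f) :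
    f '' ⋂ n, K n = ⋂ n, f '' K n := by
  refine Subset.antisymm (image_iInter_subset K f) fun y hy => ?_
  have hfiber : ∀ n, IsClosed (K n ∩ f ⁻¹' {y}) :=
    fun n => (hKc n).inter (isClosed_singleton.preimage hf)
  obtain ⟨x, hx⟩ := IsCompact.nonempty_iInter_of_sequence_nonempty_isCompact_isClosed _
    (fun n => inter_subset_inter_left _ (hK n.le_succ))
    (fun n => by obtain ⟨x, hx, rfl⟩ := mem_iInter.1 hy n; exact ⟨x, hx, rfl⟩)
    (hK₀.inter_right (isClosed_singleton.preimage hf)) hfiber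
  rw [← iInter_inter] at hx
  exact ⟨x, hx.1, hx.2⟩

section omegaLimitAtTopNat

variable {α β : Type*} [TopologicalSpace β] {ϕ : ℕ → α → β} {s : Set α} {n : ℕ}

theorem omegaLimit_atTop_nat_eq (ϕ : ℕ → α → β) (s : Set α) :
    ω⁺ ϕ s = ⋂ n, closure (⋃ k ≥ n, ϕ k '' s) := by
  rw [omegaLimit_def, atTop_basis.biInter_mem fun _ _ h => closure_mono (image2_subset_right h)]
  simp only [iInter_true, image2_Ici_eq_iUnion]

theorem isCompact_omegaLimit_atTop_nat (hc : IsCompact (closure (⋃ k ≥ n, ϕ k '' s))) :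
    IsCompact (ω⁺ ϕ s) :=
  hc.of_isClosed_subset (isClosed_omegaLimit _ _ _) <| by
    rw [omegaLimit_atTop_nat_eq]; exact iInter_subset _ n

theorem nonempty_omegaLimit_atTop_nat (hc : IsCompact (closure (⋃ k ≥ n, ϕ k '' s)))
    (hs : s.Nonempty) : (ω⁺ ϕ s).Nonempty :=
  nonempty_omegaLimit_of_isCompact_absorbing _ _ _ hc
    ⟨Ici n, Ici_mem_atTop n, closure_mono (image2_Ici_eq_iUnion ϕ s n).subset⟩ hs

end omegaLimitAtTopNat

section iterate

variable {X : Type*} {S : X → X} {s : Set X} {n : ℕ}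

theorem image_iUnion_iterate_image :
    S '' ⋃ k ≥ n, S^[k] '' s = ⋃ k ≥ n + 1, S^[k] '' s := by
  ext y
  simp only [image_iUnion, image_image, mem_iUnion, mem_image, ← Function.iterate_succ_apply' S]
  constructor
  · rintro ⟨k, hk, x, hx, rfl⟩
    exact ⟨k + 1, by omega, x, hx, rfl⟩
  · rintro ⟨k', hk, x, hx, rfl⟩
    obtain ⟨k, rfl⟩ : ∃ k, k' = k + 1 := ⟨k' - 1, by omega⟩
    exact ⟨k, by omega, x, hx, rfl⟩

theorem iterate_mem_iUnion_iterate_image {x : X} {n₀ : ℕ} (hx : S^[n₀] x ∈ s) {m k : ℕ}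
    (hk : n₀ + m ≤ k) : S^[k] x ∈ ⋃ j ≥ m, S^[j] '' s :=
  mem_biUnion (show m ≤ k - n₀ by omega)
    ⟨_, hx, by rw [← Function.iterate_add_apply, Nat.sub_add_cancel (by omega)]⟩

theorem omegaLimit_iterate_singleton_subset [TopologicalSpace X] {x : X} {n₀ : ℕ} (hx : S^[n₀] x ∈ s) :
    ω⁺ (Nat.iterate S) {x} ⊆ ω⁺ (Nat.iterate S) s := by
  simp only [omegaLimit_atTop_nat_eq]
  exact iInter_mono' fun m => ⟨n₀ + m, closure_mono <| iUnion₂_subset fun k hk => by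
    rw [image_singleton, singleton_subset_iff]
    exact iterate_mem_iUnion_iterate_image hx hk⟩

theorem image_omegaLimit_iterate [TopologicalSpace X] [T2Space X] (hS : Continuous S)
    (hc : IsCompact (closure (⋃ k ≥ n, S^[k] '' s))) :
    S '' ω⁺ (Nat.iterate S) s = ω⁺ (Nat.iterate S) s := by
  set K : ℕ → Set X := fun m => closure (⋃ k ≥ m, S^[k] '' s)
  have hK : Antitone K := fun _ _ h => closure_mono (antitone_iUnion_ge _ h)
  have hKc : ∀ j, IsCompact (K (j + n)) := fun j =>
    hc.of_isClosed_subset isClosed_closure (hK (Nat.le_add_left n j))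
  have hSK : ∀ j, S '' K (j + n) = K (j + n + 1) := fun j => by
    rw [image_closure_of_isCompact (hKc j) hS.continuousOn, image_iUnion_iterate_image]
  calc S '' ω⁺ (Nat.iterate S) s = S '' ⋂ j, K (j + n) := by
        rw [omegaLimit_atTop_nat_eq, hK.iInter_nat_add]
    _ = ⋂ j, S '' K (j + n) :=
        (hK.comp_monotone fun _ _ h => Nat.add_le_add_right h n).image_iInter_of_isCompact (hKc 0)
          (fun _ => isClosed_closure) hS
    _ = ⋂ j, K (j + (n + 1)) := by simp only [hSK, Nat.add_assoc]
    _ = ω⁺ (Nat.iterate S) s := by rw [hK.iInter_nat_add, omegaLimit_atTop_nat_eq]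

end iterate

theorem tendsto_infDist_omegaLimit_iterate {X : Type*} [MetricSpace X] {S : X → X} {s : Set X}
    {n : ℕ} (hc : IsCompact (closure (⋃ k ≥ n, S^[k] '' s))) {x : X} {n₀ : ℕ}
    (hx : S^[n₀] x ∈ s) :
    Tendsto (fun k => infDist (S^[k] x) (ω⁺ (Nat.iterate S) s)) atTop (𝓝 0) := by
  refine tendsto_order.2 ⟨fun _ ha => .of_forall fun _ => ha.trans_le infDist_nonneg,
    fun ε hε => ?_⟩
  have horbit : ∀ᶠ k in atTop, MapsTo (S^[k]) {x} (closure (⋃ k ≥ n, S^[k] '' s)) := by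
    filter_upwards [eventually_ge_atTop (n₀ + n)] with k hk
    exact mapsTo_singleton.2 (subset_closure (iterate_mem_iUnion_iterate_image hx hk))
  filter_upwards [eventually_mapsTo_of_isCompact_absorbing_of_isOpen_of_omegaLimit_subset _ _ _
    hc horbit isOpen_thickening
    ((omegaLimit_iterate_singleton_subset hx).trans (self_subset_thickening hε _))] with k hk
  obtain ⟨y, hy, hdist⟩ := mem_thickening_iff.1 (hk rfl)
  exact (infDist_le_dist_of_mem hy).trans_lt hdist

theorem discrete_global_attractor_general {H : Type*} [MetricSpace H]
    (S : H → H) (hS : Continuous S) (B : Set H) (hBne : B.Nonempty)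
    (hBbdd : Bornology.IsBounded B)
    (habs : ∀ θ0 : H, ∃ n₀ : ℕ, ∀ n : ℕ, n₀ ≤ n → S^[n] θ0 ∈ B)
    (hcpt : ∀ C : Set H, Bornology.IsBounded C →
      ∃ n₁ : ℕ, IsCompact (closure (⋃ n ≥ n₁, S^[n] '' C))) :
    (⋂ n : ℕ, closure (⋃ k ≥ n, S^[k] '' B)).Nonempty ∧
      IsCompact (⋂ n : ℕ, closure (⋃ k ≥ n, S^[k] '' B)) ∧
      S '' (⋂ n : ℕ, closure (⋃ k ≥ n, S^[k] '' B)) =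
        ⋂ n : ℕ, closure (⋃ k ≥ n, S^[k] '' B) ∧
      ∀ θ0 : H, Tendsto
        (fun n : ℕ => Metric.infDist (S^[n] θ0) (⋂ m : ℕ, closure (⋃ k ≥ m, S^[k] '' B)))
        atTop (nhds 0) := by
  obtain ⟨n₁, hK⟩ := hcpt B hBbdd
  rw [← omegaLimit_atTop_nat_eq]
  refine ⟨nonempty_omegaLimit_atTop_nat hK hBne, isCompact_omegaLimit_atTop_nat hK,
    image_omegaLimit_iterate hS hK, fun θ0 => ?_⟩
  obtain ⟨n₀, hn₀⟩ := habs θ0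
  exact tendsto_infDist_omegaLimit_iterate hK (hn₀ n₀ le_rfl)

/-- Existence of the global attractor for a discrete dynamical system
(Proposition 7 of the paper, after Temam). -/
theorem discrete_global_attractor {H : Type*} [MetricSpace H] [CompleteSpace H]
    (S : H → H) (hS : Continuous S) (B : Set H) (hBne : B.Nonempty)
    (hBbdd : Bornology.IsBounded B)
    (habs : ∀ θ0 : H, ∃ n₀ : ℕ, ∀ n : ℕ, n₀ ≤ n → S^[n] θ0 ∈ B)
    (hcpt : ∀ C : Set H, Bornology.IsBounded C →
      ∃ n₁ : ℕ, IsCompact (closure (⋃ n ≥ n₁, S^[n] '' C))) :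
    (⋂ n : ℕ, closure (⋃ k ≥ n, S^[k] '' B)).Nonempty ∧
      IsCompact (⋂ n : ℕ, closure (⋃ k ≥ n, S^[k] '' B)) ∧
      S '' (⋂ n : ℕ, closure (⋃ k ≥ n, S^[k] '' B)) =
        ⋂ n : ℕ, closure (⋃ k ≥ n, S^[k] '' B) ∧
      ∀ θ0 : H, Tendsto
        (fun n : ℕ => Metric.infDist (S^[n] θ0) (⋂ m : ℕ, closure (⋃ k ≥ m, S^[k] '' B)))
        atTop (nhds 0) :=
  discrete_global_attractor_general S hS B hBne hBbdd habs hcpt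
end
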